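/- (Cut points of ℤ^d-tiles.) Let T be a connected ℤ^d-tile T(A,D) with Hata graphs G_n = (V_n, E_n), and let n₀ ≥ 1. Suppose that for each n ≥ n₀ there is a partition V_n = W₁^(n) ∪ W₂^(n) ∪ W₃^(n) into pairwise disjoint nonempty sets satisfying: (i) the subgraph of G_n induced on W₂^(n) is connected, and W₂^(n) separates G_n between W₁^(n) and W₃^(n) (i.e., (T+v) ∩ (T+v') = ∅ for all v ∈ W₁^(n), v' ∈ W₃^(n)); (ii) W₁^(n+1) ⊆ C(W₁^(n)) ∪ C(W₂^(n)), W₂^(n+1) ⊆ C(W₂^(n)), and W₃^(n+1) ⊆ C(W₃^(n)) ∪ C(W₂^(n)); (iii) there is an integer K with #W₂^(n) ≤ K for all n ≥ n₀. Then ⋂_{n≥n₀} X_n(W₂^(n)) consists of a single point z, and z is a cut point of T (i.e., T \ {z} is disconnected). -/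

import Mathlib

open Set Filter Topology Matrix

noncomputable section

/-- A set is the union of two nonempty separated sets. -/
def SepUnion {α : Type*} [TopologicalSpace α] (S : Set α) : Prop :=
  ∃ U V : Set α, S = U ∪ V ∧ U.Nonempty ∧ V.Nonempty ∧
    closure U ∩ V = ∅ ∧ U ∩ closure V = ∅

/-- `X` is a cut set of `T`: `X ⊆ T` and `T \ X` is disconnected. -/
def IsCutSet {α : Type*} [TopologicalSpace α] (T X : Set α) : Prop :=
  X ⊆ T ∧ SepUnion (T \ X)

/-- `X` is an irreducible cut set of `T`. -/
def IsIrredCutSet {α : Type*} [TopologicalSpace α] (T X : Set α) : Prop :=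
  IsCutSet T X ∧ ∀ X₀ : Set α, X₀ ⊂ X → closure X₀ ∩ T ⊆ X₀ → ¬ SepUnion (T \ X₀)

/-- The real matrix obtained from an integer matrix. -/
def rmat {d : ℕ} (A : Matrix (Fin d) (Fin d) ℤ) : Matrix (Fin d) (Fin d) ℝ :=
  A.map Int.cast

/-- The real vector obtained from an integer vector. -/
def rvec {d : ℕ} (v : Fin d → ℤ) : Fin d → ℝ := fun i => (v i : ℝ)

/-- The translate `T + v` of `T` by a lattice vector `v`. -/
def trT {d : ℕ} (T : Set (Fin d → ℝ)) (v : Fin d → ℤ) : Set (Fin d → ℝ) :=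
  (fun x => x + rvec v) '' T

/-- Every complex eigenvalue of `A` has modulus `> 1`. -/
def Expanding {d : ℕ} (A : Matrix (Fin d) (Fin d) ℤ) : Prop :=
  ∀ μ : ℂ, Module.End.HasEigenvalue (Matrix.toLin' (A.map (Int.cast : ℤ → ℂ))) μ →
    1 < ‖μ‖

/-- `D` is a complete set of coset representatives of `ℤ^d / A ℤ^d`. -/
def ResidueSystem {d : ℕ} (A : Matrix (Fin d) (Fin d) ℤ) (D : Set (Fin d → ℤ)) : Prop :=
  ∀ x : Fin d → ℤ, ∃! e, e ∈ D ∧ ∃ y : Fin d → ℤ, x = A.mulVec y + e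

/-- `T` is the attractor `T(A,D)`: nonempty, compact, with `A·T = T + D`. -/
def SelfAffine {d : ℕ} (A : Matrix (Fin d) (Fin d) ℤ) (D : Set (Fin d → ℤ))
    (T : Set (Fin d → ℝ)) : Prop :=
  T.Nonempty ∧ IsCompact T ∧
    (rmat A).mulVec '' T = ⋃ e ∈ D, (fun x => x + rvec e) '' T

/-- `T = T(A,D)` is a `ℤ^d`-tile: a self-affine attractor for an expanding integer
matrix and a standard digit set, with nonempty interior, tiling `ℝ^d` by `ℤ^d`. -/
def IsZdTile {d : ℕ} (A : Matrix (Fin d) (Fin d) ℤ) (D : Set (Fin d → ℤ))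
    (T : Set (Fin d → ℝ)) : Prop :=
  Expanding A ∧ ResidueSystem A D ∧ SelfAffine A D T ∧ (interior T).Nonempty ∧
    (⋃ v : Fin d → ℤ, trT T v) = univ ∧
    Pairwise fun v₁ v₂ : Fin d → ℤ => interior (trT T v₁) ∩ trT T v₂ = ∅

/-- `V_n = D + A·D + ⋯ + A^{n-1}·D`, the vertex set of the `n`-th Hata graph. -/
def Vset {d : ℕ} (A : Matrix (Fin d) (Fin d) ℤ) (D : Set (Fin d → ℤ)) (n : ℕ) :
    Set (Fin d → ℤ) :=
  {v | ∃ dig : Fin n → (Fin d → ℤ), (∀ k, dig k ∈ D) ∧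
    v = ∑ k : Fin n, (A ^ (k : ℕ)).mulVec (dig k)}

/-- The set of children `C(U) = A·U + D`. -/
def childSet {d : ℕ} (A : Matrix (Fin d) (Fin d) ℤ) (D : Set (Fin d → ℤ))
    (U : Set (Fin d → ℤ)) : Set (Fin d → ℤ) :=
  {w | ∃ u ∈ U, ∃ e ∈ D, w = A.mulVec u + e}

/-- `X_n(W) = ⋃_{v ∈ W} A^{-n}(T + v)`. -/
def XnSet {d : ℕ} (A : Matrix (Fin d) (Fin d) ℤ) (T : Set (Fin d → ℝ)) (n : ℕ)
    (W : Set (Fin d → ℤ)) : Set (Fin d → ℝ) :=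
  ⋃ v ∈ W, ((rmat A)⁻¹ ^ n).mulVec '' trT T v

/-- The subgraph of the `n`-th Hata graph induced on `W` is connected:
any two vertices of `W` are joined by a path inside `W`, consecutive tiles meeting. -/
def HataConn {d : ℕ} (T : Set (Fin d → ℝ)) (W : Set (Fin d → ℤ)) : Prop :=
  ∀ v ∈ W, ∀ w ∈ W,
    Relation.ReflTransGen (fun a b => a ∈ W ∧ b ∈ W ∧ (trT T a ∩ trT T b).Nonempty) v w


/-! The sets `S n = X_n(W₂ n)` are nested, because `X_{n+1}(C(U)) = X_n(U)` by self-affinity.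
Each `S n` is a chain of at most `K` pieces `A⁻ⁿ(T + v)` of diameter `≤ ‖A⁻ⁿ‖ diam T`, and
`‖A⁻ⁿ‖ → 0` by Gelfand's formula since `A` is expanding; hence `⋂ S n = {z}`.
A point of `T` other than `z` leaves some `S n`, and then lies in `X_n(W₁ n)` or in `X_n(W₃ n)`;
by (ii) and the separation in (i) it stays on that side at all finer levels. The union `U` of
the first sides lies in the closed set `X_n(W₁ n) ∪ S n` for every `n`, which misses
`X_n(W₃ n) \ S n`; as the union `V` of the second sides is made of such sets, `U` and `V` are
separated. Both are nonempty because distinct tiles have disjoint interiors. -/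

attribute [local instance] Matrix.linftyOpNormedRing Matrix.linftyOpNormedAlgebra

open scoped NNReal ENNReal

theorem tendsto_norm_pow_of_forall_spectrum_lt_one {𝔸 : Type*} [NormedRing 𝔸]
    [NormedAlgebra ℂ 𝔸] [CompleteSpace 𝔸] {a : 𝔸} (ha : ∀ z ∈ spectrum ℂ a, ‖z‖₊ < 1) :
    Tendsto (fun n : ℕ => ‖a ^ n‖) atTop (𝓝 0) := by
  rcases subsingleton_or_nontrivial 𝔸 with h𝔸 | h𝔸
  · simp [Subsingleton.elim _ (0 : 𝔸)]
  obtain ⟨r, hr, hr1⟩ := ENNReal.lt_iff_exists_nnreal_btwn.mp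
    (spectrum.spectralRadius_lt_of_forall_lt a (r := 1) ha)
  have hpow : ∀ᶠ n : ℕ in atTop, ‖a ^ n‖ ≤ (r : ℝ) ^ n := by
    filter_upwards [(spectrum.pow_nnnorm_pow_one_div_tendsto_nhds_spectralRadius a
      ).eventually_lt_const hr, eventually_gt_atTop 0] with n hn hn0
    have := ENNReal.rpow_le_rpow hn.le (Nat.cast_nonneg n)
    rw [← ENNReal.rpow_mul, one_div_mul_cancel (by positivity), ENNReal.rpow_one,
      ENNReal.rpow_natCast] at this
    exact_mod_cast this
  exact squeeze_zero' (.of_forall fun n => norm_nonneg _) hpow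
    (tendsto_pow_atTop_nhds_zero_of_lt_one r.2 (by exact_mod_cast hr1))

namespace Matrix

variable {n : Type*} [Fintype n] [DecidableEq n]

theorem map_nonsing_inv {K L : Type*} [Field K] [Field L] (f : K →+* L) (M : Matrix n n K) :
    M⁻¹.map f = (M.map f)⁻¹ := by
  by_cases hM : IsUnit M.det
  · refine (inv_eq_left_inv ?_).symm
    rw [← RingHom.mapMatrix_apply, ← RingHom.mapMatrix_apply, ← map_mul, nonsing_inv_mul M hM,
      map_one]
  · have hfM : ¬IsUnit (M.map f).det := by
      rwa [← RingHom.mapMatrix_apply, ← RingHom.map_det, isUnit_iff_ne_zero, map_ne_zero,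
        ← isUnit_iff_ne_zero]
    rw [nonsing_inv_apply_not_isUnit M hM, nonsing_inv_apply_not_isUnit _ hfM]
    ext; simp

theorem linfty_opNorm_map_ofReal (M : Matrix n n ℝ) :
    ‖M.map (Complex.ofReal : ℝ → ℂ)‖ = ‖M‖ := by
  simp [linfty_opNorm_def, Complex.nnnorm_real]

theorem lipschitzWith_mulVec {α : Type*} [NormedRing α] (M : Matrix n n α) :
    LipschitzWith ‖M‖₊ M.mulVec :=
  LipschitzWith.of_dist_le_mul fun x y => by
    rw [dist_eq_norm, dist_eq_norm, ← mulVec_sub]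
    exact linfty_opNorm_mulVec _ _

theorem isUnit_of_forall_spectrum_one_lt {M : Matrix n n ℂ} (hM : ∀ μ ∈ spectrum ℂ M, 1 < ‖μ‖) :
    IsUnit M := by
  by_contra h
  have := hM 0 (spectrum.zero_mem_iff ℂ |>.mpr h)
  norm_num at this

theorem nnnorm_lt_one_of_mem_spectrum_inv {M : Matrix n n ℂ}
    (hM : ∀ μ ∈ spectrum ℂ M, 1 < ‖μ‖) : ∀ μ ∈ spectrum ℂ M⁻¹, ‖μ‖₊ < 1 := by
  intro μ hμ
  obtain ⟨u, rfl⟩ := isUnit_of_forall_spectrum_one_lt hM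
  rw [← coe_units_inv, ← spectrum.map_inv, Set.mem_inv] at hμ
  have hμ' := hM _ hμ
  rw [norm_inv] at hμ'
  have h0 : 0 < ‖μ‖ := inv_pos.mp (one_pos.trans hμ')
  exact_mod_cast (one_lt_inv₀ h0).mp hμ'

end Matrix

namespace Expanding

variable {d : ℕ} {A : Matrix (Fin d) (Fin d) ℤ}

theorem one_lt_norm_of_mem_spectrum (hA : Expanding A) :
    ∀ μ ∈ spectrum ℂ (A.map (Int.cast : ℤ → ℂ)), 1 < ‖μ‖ := fun μ hμ => hA μ <| by
  rwa [Module.End.hasEigenvalue_iff_mem_spectrum, Matrix.spectrum_toLin']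

theorem det_ne_zero (hA : Expanding A) : A.det ≠ 0 := by
  have h := (Matrix.isUnit_iff_isUnit_det _).mp
    (Matrix.isUnit_of_forall_spectrum_one_lt hA.one_lt_norm_of_mem_spectrum)
  rw [← Int.cast_det, isUnit_iff_ne_zero] at h
  exact_mod_cast h

theorem isUnit_det_rmat (hA : Expanding A) : IsUnit (rmat A).det := by
  rw [rmat, ← Int.cast_det, isUnit_iff_ne_zero]
  exact_mod_cast hA.det_ne_zero

theorem tendsto_norm_inv_pow (hA : Expanding A) :
    Tendsto (fun n : ℕ => ‖(rmat A)⁻¹ ^ n‖) atTop (𝓝 0) := by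
  have hmap : (rmat A).map Complex.ofReal = A.map (Int.cast : ℤ → ℂ) := by
    ext; simp [rmat]
  have hc : ∀ n, ‖(rmat A)⁻¹ ^ n‖ = ‖(A.map (Int.cast : ℤ → ℂ))⁻¹ ^ n‖ := fun n => by
    rw [← Matrix.linfty_opNorm_map_ofReal, ← hmap]
    have := Complex.ofRealHom.mapMatrix.map_pow (rmat A)⁻¹ n
    rw [RingHom.mapMatrix_apply, RingHom.mapMatrix_apply, Matrix.map_nonsing_inv] at this
    exact congrArg norm this
  simp_rw [hc]
  exact tendsto_norm_pow_of_forall_spectrum_lt_one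
    (Matrix.nnnorm_lt_one_of_mem_spectrum_inv hA.one_lt_norm_of_mem_spectrum)

end Expanding

section Chain

open SimpleGraph

variable {ι X : Type*} {W : Set ι} {P : ι → Set X}

def ChainRel (W : Set ι) (P : ι → Set X) (a b : ι) : Prop :=
  a ∈ W ∧ b ∈ W ∧ (P a ∩ P b).Nonempty

theorem ChainRel.of_fromRel_adj {a b : ι} (h : (fromRel (ChainRel W P)).Adj a b) :
    ChainRel W P a b := by
  obtain ⟨-, h | ⟨hb, ha, hba⟩⟩ := h
  · exact h
  · exact ⟨ha, hb, Set.inter_comm (P b) (P a) ▸ hba⟩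

theorem reachable_fromRel_of_reflTransGen {v w : ι}
    (h : Relation.ReflTransGen (ChainRel W P) v w) : (fromRel (ChainRel W P)).Reachable v w := by
  induction h with
  | refl => rfl
  | @tail b c _ hbc ih =>
    obtain rfl | hne := eq_or_ne b c
    · exact ih
    · exact ih.trans (Adj.reachable ⟨hne, .inl hbc⟩)

theorem support_subset_of_walk_fromRel_chainRel {a b : ι}
    (q : (fromRel (ChainRel W P)).Walk a b) (ha : a ∈ W) : ∀ s ∈ q.support, s ∈ W := by
  induction q with
  | nil => simpa using ha
  | cons h q ih =>
    simp only [Walk.support_cons, List.mem_cons, forall_eq_or_imp]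
    exact ⟨ha, ih (ChainRel.of_fromRel_adj h).2.1⟩

variable [PseudoEMetricSpace X]

theorem edist_le_of_walk_fromRel_chainRel {ε : ℝ≥0∞} (hP : ∀ i ∈ W, Metric.ediam (P i) ≤ ε)
    {a b : ι} (q : (fromRel (ChainRel W P)).Walk a b) (ha : a ∈ W) {x y : X} (hx : x ∈ P a)
    (hy : y ∈ P b) : edist x y ≤ (q.length + 1) * ε := by
  induction q generalizing x with
  | nil => simpa using (Metric.edist_le_ediam_of_mem hx hy).trans (hP _ ha)
  | cons h q ih =>
    obtain ⟨-, hc, t, hta, htc⟩ := ChainRel.of_fromRel_adj h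
    calc edist x y ≤ edist x t + edist t y := edist_triangle _ _ _
      _ ≤ ε + (q.length + 1) * ε :=
        add_le_add ((Metric.edist_le_ediam_of_mem hx hta).trans (hP _ ha)) (ih hc htc hy)
      _ = ((q.cons h).length + 1) * ε := by simp only [Walk.length_cons]; push_cast; ring

theorem ediam_biUnion_le_of_chain {N : ℕ} (hW : W.encard ≤ N) {ε : ℝ≥0∞}
    (hP : ∀ i ∈ W, Metric.ediam (P i) ≤ ε)
    (hchain : ∀ v ∈ W, ∀ w ∈ W, Relation.ReflTransGen (ChainRel W P) v w) :
    Metric.ediam (⋃ i ∈ W, P i) ≤ N * ε := by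
  classical
  refine Metric.ediam_le fun x hx y hy => ?_
  obtain ⟨v, hv, hxv⟩ := Set.mem_iUnion₂.mp hx
  obtain ⟨w, hw, hyw⟩ := Set.mem_iUnion₂.mp hy
  obtain ⟨q⟩ := reachable_fromRel_of_reflTransGen (hchain v hv w hw)
  let p := q.toPath
  -- a path repeats no index, so it has at most `N` vertices
  have hlen : p.1.length + 1 ≤ N := by
    have hsub : (↑p.1.support.toFinset : Set ι) ⊆ W := fun s hs =>
      support_subset_of_walk_fromRel_chainRel p.1 hv s (List.mem_toFinset.mp hs)
    have := (Set.encard_le_encard hsub).trans hW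
    rwa [Set.encard_coe_eq_coe_finsetCard, List.toFinset_card_of_nodup p.2.support_nodup,
      Walk.length_support, Nat.cast_le] at this
  calc edist x y ≤ (p.1.length + 1) * ε := edist_le_of_walk_fromRel_chainRel hP p.1 hv hxv hyw
    _ ≤ N * ε := by gcongr; exact_mod_cast hlen

end Chain

section Nested

variable {X : Type*} {T : Set X} {P Q S : ℕ → Set X}

theorem iUnion_diff_subset_union_of_nested (hPT : ∀ n, P n ⊆ T)
    (hcover : ∀ n, T \ S n ⊆ P n ∪ Q n) (hdisj : ∀ n, Disjoint (P n) (Q n))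
    (hP : ∀ n, P (n + 1) ⊆ P n ∪ S n) (hQ : ∀ n, Q (n + 1) ⊆ Q n ∪ S n) (hS : Antitone S)
    (n : ℕ) : ⋃ m, P m \ S m ⊆ P n ∪ S n := by
  have hfwd : ∀ m, P m \ S m ⊆ P (m + 1) \ S (m + 1) := by
    rintro m x ⟨hxP, hxS⟩
    have hxS' : x ∉ S (m + 1) := fun h => hxS (hS m.le_succ h)
    refine ⟨?_, hxS'⟩
    rcases hcover (m + 1) ⟨hPT m hxP, hxS'⟩ with h | h
    · exact h
    · rcases hQ m h with h | h
      · exact absurd h (Set.disjoint_left.mp (hdisj m) hxP)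
      · exact absurd h hxS
  have hfwd' : ∀ m k, m ≤ k → P m \ S m ⊆ P k \ S k := by
    intro m k hmk
    induction k, hmk using Nat.le_induction with
    | base => exact subset_rfl
    | succ k _ ih => exact ih.trans (hfwd k)
  have hback : ∀ m, n ≤ m → P m ⊆ P n ∪ S n := by
    intro m hm
    induction m, hm using Nat.le_induction with
    | base => exact Set.subset_union_left
    | succ m hm ih =>
      exact (hP m).trans (Set.union_subset ih (Set.subset_union_of_subset_right (hS hm) _))
  refine Set.iUnion_subset fun m => ?_
  rcases le_total n m with hnm | hmn
  · exact Set.sdiff_subset.trans (hback m hnm)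
  · exact (hfwd' m n hmn).trans (Set.sdiff_subset.trans Set.subset_union_left)

theorem sepUnion_diff_singleton_of_nested [TopologicalSpace X] {z : X} (hPT : ∀ n, P n ⊆ T)
    (hQT : ∀ n, Q n ⊆ T) (hcover : ∀ n, T \ S n ⊆ P n ∪ Q n)
    (hdisj : ∀ n, Disjoint (P n) (Q n)) (hP : ∀ n, P (n + 1) ⊆ P n ∪ S n)
    (hQ : ∀ n, Q (n + 1) ⊆ Q n ∪ S n) (hS : Antitone S) (hPc : ∀ n, IsClosed (P n))
    (hQc : ∀ n, IsClosed (Q n)) (hSc : ∀ n, IsClosed (S n)) (hz : ⋂ n, S n = {z})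
    (hPne : (P 0 \ S 0).Nonempty) (hQne : (Q 0 \ S 0).Nonempty) : SepUnion (T \ {z}) := by
  have hU := iUnion_diff_subset_union_of_nested hPT hcover hdisj hP hQ hS
  have hV := iUnion_diff_subset_union_of_nested hQT
    (fun n => (hcover n).trans (Set.union_comm _ _).le) (fun n => (hdisj n).symm) hQ hP hS
  have hsep : ∀ {P Q : ℕ → Set X}, (∀ n, Disjoint (P n) (Q n)) → (∀ n, IsClosed (P n ∪ S n)) →
      (∀ n, ⋃ m, P m \ S m ⊆ P n ∪ S n) → closure (⋃ m, P m \ S m) ∩ ⋃ m, Q m \ S m = ∅ := by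
    intro P Q hdisj hc hsub
    refine Set.eq_empty_of_forall_notMem fun x ⟨hxU, hxV⟩ => ?_
    obtain ⟨n, hxQ, hxS⟩ := Set.mem_iUnion.mp hxV
    rcases closure_minimal (hsub n) (hc n) hxU with h | h
    · exact Set.disjoint_left.mp (hdisj n) h hxQ
    · exact hxS h
  refine ⟨⋃ m, P m \ S m, ⋃ m, Q m \ S m, ?_, ⟨_, Set.mem_iUnion_of_mem 0 hPne.some_mem⟩,
    ⟨_, Set.mem_iUnion_of_mem 0 hQne.some_mem⟩, hsep hdisj (fun n => (hPc n).union (hSc n)) hU,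
    Set.inter_comm _ _ ▸ hsep (fun n => (hdisj n).symm) (fun n => (hQc n).union (hSc n)) hV⟩
  ext x
  have hzS : ∀ n, z ∈ S n := Set.mem_iInter.mp (hz ▸ Set.mem_singleton z)
  simp only [Set.mem_sdiff, Set.mem_singleton_iff, Set.mem_union, Set.mem_iUnion]
  constructor
  · rintro ⟨hxT, hxz⟩
    have : x ∉ ⋂ n, S n := hz ▸ hxz
    obtain ⟨n, hxS⟩ := by simpa only [Set.mem_iInter, not_forall] using this
    exact (hcover n ⟨hxT, hxS⟩).imp (fun h => ⟨n, h, hxS⟩) (fun h => ⟨n, h, hxS⟩)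
  · rintro (⟨n, hxP, hxS⟩ | ⟨n, hxQ, hxS⟩)
    · exact ⟨hPT n hxP, fun h => hxS (h ▸ hzS n)⟩
    · exact ⟨hQT n hxQ, fun h => hxS (h ▸ hzS n)⟩

end Nested

theorem exists_iInter_eq_singleton_of_tendsto_ediam {X : Type*} [EMetricSpace X]
    {S : ℕ → Set X} (hS : Antitone S) (hne : ∀ n, (S n).Nonempty) (hc : ∀ n, IsCompact (S n))
    (hdiam : Tendsto (fun n => Metric.ediam (S n)) atTop (𝓝 0)) : ∃ z, ⋂ n, S n = {z} := by
  obtain ⟨z, hz⟩ := IsCompact.nonempty_iInter_of_sequence_nonempty_isCompact_isClosed S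
    (fun n => hS n.le_succ) hne (hc 0) fun n => (hc n).isClosed
  refine ⟨z, Set.eq_singleton_iff_unique_mem.mpr ⟨hz, fun x hx => ?_⟩⟩
  have hle : ∀ n, edist x z ≤ Metric.ediam (S n) := fun n =>
    Metric.edist_le_ediam_of_mem (Set.mem_iInter.mp hx n) (Set.mem_iInter.mp hz n)
  exact edist_eq_zero.mp (le_antisymm (ge_of_tendsto' hdiam hle) bot_le)

section Tile

variable {d : ℕ} {A : Matrix (Fin d) (Fin d) ℤ} {D : Set (Fin d → ℤ)} {T : Set (Fin d → ℝ)}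

theorem rvec_add (u v : Fin d → ℤ) : rvec (u + v) = rvec u + rvec v := by
  ext; simp [rvec]

theorem rvec_mulVec (A : Matrix (Fin d) (Fin d) ℤ) (u : Fin d → ℤ) :
    rvec (A *ᵥ u) = rmat A *ᵥ rvec u := by
  ext; simp [rvec, rmat, mulVec, dotProduct]

theorem isometry_rvec : Isometry (rvec : (Fin d → ℤ) → Fin d → ℝ) :=
  Isometry.piMap (fun _ => Int.cast) fun _ => Isometry.of_dist_eq Int.dist_cast_real

theorem trT_add (u v : Fin d → ℤ) : trT T (u + v) = (· + rvec u) '' trT T v := by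
  simp only [trT, Set.image_image, rvec_add]
  exact Set.image_congr fun x _ => by abel

theorem SelfAffine.finite (hSA : SelfAffine A D T) : D.Finite := by
  obtain ⟨⟨t, ht⟩, hT, hAT⟩ := hSA
  have hK : IsCompact ((· - t) '' ((rmat A).mulVec '' T)) :=
    (hT.image (Continuous.matrix_mulVec continuous_const continuous_id)).image
      (continuous_sub_right t)
  have hD : D ⊆ rvec ⁻¹' ((· - t) '' ((rmat A).mulVec '' T)) := fun e he =>
    ⟨t + rvec e, hAT ▸ Set.mem_biUnion he ⟨t, ht, rfl⟩, add_sub_cancel_left _ _⟩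
  exact ((isometry_rvec.antilipschitz.isBounded_preimage hK.isBounded).isCompact_closure
    |>.finite_of_discrete).subset (hD.trans subset_closure)

theorem SelfAffine.iUnion_trT_mulVec_add (hSA : SelfAffine A D T) (u : Fin d → ℤ) :
    ⋃ e ∈ D, trT T (A *ᵥ u + e) = (rmat A).mulVec '' trT T u := by
  simp_rw [trT_add, ← Set.image_iUnion₂]
  rw [show ⋃ e ∈ D, trT T e = (rmat A).mulVec '' T from hSA.2.2.symm, trT, Set.image_image,
    Set.image_image, rvec_mulVec]
  exact Set.image_congr fun x _ => (mulVec_add _ _ _).symm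

theorem XnSet_union (n : ℕ) (W W' : Set (Fin d → ℤ)) :
    XnSet A T n (W ∪ W') = XnSet A T n W ∪ XnSet A T n W' :=
  Set.biUnion_union _ _ _

theorem XnSet_mono (n : ℕ) {W W' : Set (Fin d → ℤ)} (h : W ⊆ W') :
    XnSet A T n W ⊆ XnSet A T n W' :=
  Set.biUnion_subset_biUnion_left h

theorem XnSet_childSet (hdet : IsUnit (rmat A).det) (hSA : SelfAffine A D T) (n : ℕ)
    (W : Set (Fin d → ℤ)) : XnSet A T (n + 1) (childSet A D W) = XnSet A T n W := by
  have hchild : childSet A D W = ⋃ u ∈ W, ⋃ e ∈ D, {A *ᵥ u + e} := by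
    ext; simp [childSet]
  have hinv : ∀ x, ((rmat A)⁻¹ ^ (n + 1)) *ᵥ (rmat A *ᵥ x) = ((rmat A)⁻¹ ^ n) *ᵥ x := by
    intro x; rw [mulVec_mulVec, pow_succ, mul_assoc, nonsing_inv_mul _ hdet, mul_one]
  simp only [XnSet, hchild, Set.biUnion_iUnion, Set.biUnion_singleton]
  refine Set.iUnion₂_congr fun u _ => ?_
  rw [← Set.image_iUnion₂, hSA.iUnion_trT_mulVec_add, Set.image_image]
  exact Set.image_congr fun x _ => hinv x

theorem Vset_zero : Vset A D 0 = {0} := by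
  ext v
  simp [Vset]

theorem sum_pow_mulVec_fin_succ {n : ℕ} (dig : Fin (n + 1) → Fin d → ℤ) :
    ∑ k : Fin (n + 1), (A ^ (k : ℕ)) *ᵥ dig k =
      A *ᵥ (∑ k : Fin n, (A ^ (k : ℕ)) *ᵥ dig k.succ) + dig 0 := by
  simp [Fin.sum_univ_succ, pow_succ', ← mulVec_mulVec, mulVec_sum, add_comm]

theorem Vset_succ (n : ℕ) : Vset A D (n + 1) = childSet A D (Vset A D n) := by
  ext v
  constructor
  · rintro ⟨dig, hdig, rfl⟩
    exact ⟨_, ⟨fun k => dig k.succ, fun k => hdig _, rfl⟩, dig 0, hdig 0,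
      sum_pow_mulVec_fin_succ dig⟩
  · rintro ⟨u, ⟨dig, hdig, rfl⟩, e, he, rfl⟩
    refine ⟨Fin.cons e dig, Fin.cases he hdig, ?_⟩
    simp [sum_pow_mulVec_fin_succ]

theorem XnSet_Vset (hdet : IsUnit (rmat A).det) (hSA : SelfAffine A D T) (n : ℕ) :
    XnSet A T n (Vset A D n) = T := by
  induction n with
  | zero =>
    have : rvec (0 : Fin d → ℤ) = 0 := funext fun _ => Int.cast_zero
    simp [XnSet, Vset_zero, trT, this]
  | succ n ih => rw [Vset_succ, XnSet_childSet hdet hSA, ih]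

theorem Vset_finite (hD : D.Finite) (n : ℕ) : (Vset A D n).Finite := by
  induction n with
  | zero => simp [Vset_zero]
  | succ n ih =>
    rw [Vset_succ]
    exact (ih.image2 (fun u e => A *ᵥ u + e) hD).subset
      fun w ⟨u, hu, e, he, hw⟩ => ⟨u, hu, e, he, hw.symm⟩

theorem isCompact_XnSet (hT : IsCompact T) {W : Set (Fin d → ℤ)} (hW : W.Finite) (n : ℕ) :
    IsCompact (XnSet A T n W) :=
  hW.isCompact_biUnion fun _ _ =>
    ((hT.image (continuous_add_const _)).image (lipschitzWith_mulVec _).continuous)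

theorem XnSet_nonempty (hT : T.Nonempty) {W : Set (Fin d → ℤ)} (hW : W.Nonempty) (n : ℕ) :
    (XnSet A T n W).Nonempty :=
  let ⟨v, hv⟩ := hW
  Set.nonempty_biUnion.mpr ⟨v, hv, (hT.image _).image _⟩

theorem injective_mulVec_inv_pow (hdet : IsUnit (rmat A).det) (n : ℕ) :
    Function.Injective ((rmat A)⁻¹ ^ n).mulVec :=
  mulVec_injective_iff_isUnit.mpr
    (((isUnit_iff_isUnit_det _).mpr (isUnit_nonsing_inv_det _ hdet)).pow n)

theorem disjoint_XnSet (hdet : IsUnit (rmat A).det) {W W' : Set (Fin d → ℤ)}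
    (hsep : ∀ v ∈ W, ∀ v' ∈ W', trT T v ∩ trT T v' = ∅) (n : ℕ) :
    Disjoint (XnSet A T n W) (XnSet A T n W') := by
  simp only [XnSet, Set.disjoint_iUnion_left, Set.disjoint_iUnion_right]
  intro v' hv' v hv
  rw [Set.disjoint_image_iff (injective_mulVec_inv_pow hdet n), Set.disjoint_iff_inter_eq_empty]
  exact hsep v hv v' hv'

theorem ediam_XnSet_le {W : Set (Fin d → ℤ)} {N : ℕ} (hconn : HataConn T W) (hW : W.encard ≤ N)
    (n : ℕ) : Metric.ediam (XnSet A T n W) ≤ N * (‖(rmat A)⁻¹ ^ n‖₊ * Metric.ediam T) := by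
  refine ediam_biUnion_le_of_chain hW (fun v _ => ?_) fun v hv w hw => ?_
  · calc _ ≤ ‖(rmat A)⁻¹ ^ n‖₊ * Metric.ediam (trT T v) := (lipschitzWith_mulVec _).ediam_image_le _
      _ = _ := by rw [trT, (isometry_add_right _).ediam_image]
  · refine Relation.ReflTransGen.mono (fun a b ⟨ha, hb, x, hxa, hxb⟩ => ?_) _ _ (hconn v hv w hw)
    exact ⟨ha, hb, _, ⟨x, hxa, rfl⟩, ⟨x, hxb, rfl⟩⟩

theorem tendsto_ediam_XnSet (hA : Expanding A) (hT : IsCompact T) {W : ℕ → Set (Fin d → ℤ)}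
    {N : ℕ} (hW : ∀ᶠ n in atTop, HataConn T (W n) ∧ (W n).encard ≤ N) :
    Tendsto (fun n => Metric.ediam (XnSet A T n (W n))) atTop (𝓝 0) := by
  have hpow : Tendsto (fun n => (‖(rmat A)⁻¹ ^ n‖₊ : ℝ≥0∞)) atTop (𝓝 0) := by
    rw [← ENNReal.coe_zero, ENNReal.tendsto_coe, ← NNReal.tendsto_coe]
    exact hA.tendsto_norm_inv_pow
  have hbound := ENNReal.Tendsto.const_mul (a := N)
    (ENNReal.Tendsto.mul_const hpow (.inr hT.isBounded.ediam_ne_top)) (.inr (by simp))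
  rw [zero_mul, mul_zero] at hbound
  exact tendsto_of_tendsto_of_tendsto_of_le_of_le' tendsto_const_nhds hbound
    (.of_forall fun _ => zero_le) (hW.mono fun n hn => ediam_XnSet_le hn.1 hn.2 n)

theorem XnSet_diff_nonempty (hdet : IsUnit (rmat A).det) (hint : (interior T).Nonempty)
    (htiling : Pairwise fun v₁ v₂ : Fin d → ℤ => interior (trT T v₁) ∩ trT T v₂ = ∅)
    {W W' : Set (Fin d → ℤ)} {v : Fin d → ℤ} (hv : v ∈ W) (hvW' : v ∉ W') (n : ℕ) :
    (XnSet A T n W \ XnSet A T n W').Nonempty := by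
  obtain ⟨t, ht⟩ := hint
  have hx : t + rvec v ∈ interior (trT T v) :=
    (isOpenMap_add_right (rvec v)).image_interior_subset T ⟨t, ht, rfl⟩
  refine ⟨_, Set.mem_biUnion hv ⟨_, interior_subset hx, rfl⟩, fun hmem => ?_⟩
  obtain ⟨w, hw, hxw⟩ := Set.mem_iUnion₂.mp hmem
  rw [(injective_mulVec_inv_pow hdet n).mem_set_image] at hxw
  exact (htiling (ne_of_mem_of_not_mem hw hvW').symm).subset ⟨hx, hxw⟩

theorem XnSet_subset_of_subset_Vset (hdet : IsUnit (rmat A).det) (hSA : SelfAffine A D T)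
    {n : ℕ} {W : Set (Fin d → ℤ)} (hW : W ⊆ Vset A D n) : XnSet A T n W ⊆ T :=
  (XnSet_mono n hW).trans (XnSet_Vset hdet hSA n).le

theorem diff_XnSet_subset_union (hdet : IsUnit (rmat A).det) (hSA : SelfAffine A D T) {n : ℕ}
    {W₁ W₂ W₃ : Set (Fin d → ℤ)} (hpart : W₁ ∪ W₂ ∪ W₃ = Vset A D n) :
    T \ XnSet A T n W₂ ⊆ XnSet A T n W₁ ∪ XnSet A T n W₃ := by
  rintro x ⟨hxT, hx⟩
  rw [← XnSet_Vset hdet hSA n, ← hpart, XnSet_union, XnSet_union] at hxT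
  rcases hxT with (h | h) | h
  exacts [.inl h, absurd h hx, .inr h]

theorem XnSet_succ_subset (hdet : IsUnit (rmat A).det) (hSA : SelfAffine A D T) {n : ℕ}
    {W W₂ W' : Set (Fin d → ℤ)} (h : W' ⊆ childSet A D W ∪ childSet A D W₂) :
    XnSet A T (n + 1) W' ⊆ XnSet A T n W ∪ XnSet A T n W₂ := by
  rw [← XnSet_childSet hdet hSA n W, ← XnSet_childSet hdet hSA n W₂, ← XnSet_union]
  exact XnSet_mono _ h

end Tile

theorem statement4_general {d : ℕ} (A : Matrix (Fin d) (Fin d) ℤ) (D : Set (Fin d → ℤ))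
    (T : Set (Fin d → ℝ)) (htile : IsZdTile A D T)
    (n₀ : ℕ) (W₁ W₂ W₃ : ℕ → Set (Fin d → ℤ))
    -- `W₁, W₂, W₃` is a partition of `V_n` into pairwise disjoint nonempty sets
    (hpart : ∀ n, n₀ ≤ n → W₁ n ∪ W₂ n ∪ W₃ n = Vset A D n)
    (hd12 : ∀ n, n₀ ≤ n → Disjoint (W₁ n) (W₂ n))
    (hd23 : ∀ n, n₀ ≤ n → Disjoint (W₂ n) (W₃ n))
    (hne1 : ∀ n, n₀ ≤ n → (W₁ n).Nonempty)
    (hne2 : ∀ n, n₀ ≤ n → (W₂ n).Nonempty)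
    (hne3 : ∀ n, n₀ ≤ n → (W₃ n).Nonempty)
    -- (i) the subgraph induced on `W₂` is connected and `W₂` separates `W₁` from `W₃`
    (hW2conn : ∀ n, n₀ ≤ n → HataConn T (W₂ n))
    (hsep : ∀ n, n₀ ≤ n → ∀ v ∈ W₁ n, ∀ v' ∈ W₃ n, trT T v ∩ trT T v' = ∅)
    -- (ii) the inclusion relations between consecutive levels
    (hc1 : ∀ n, n₀ ≤ n → W₁ (n + 1) ⊆ childSet A D (W₁ n) ∪ childSet A D (W₂ n))
    (hc2 : ∀ n, n₀ ≤ n → W₂ (n + 1) ⊆ childSet A D (W₂ n))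
    (hc3 : ∀ n, n₀ ≤ n → W₃ (n + 1) ⊆ childSet A D (W₃ n) ∪ childSet A D (W₂ n))
    -- (iii) uniform bound on the cardinality of `W₂`
    (K : ℕ) (hK : ∀ n, n₀ ≤ n → (W₂ n).encard ≤ K) :
    ∃ z : Fin d → ℝ, (⋂ n ≥ n₀, XnSet A T n (W₂ n)) = {z} ∧
      z ∈ T ∧ SepUnion (T \ {z}) := by
  obtain ⟨hA, -, hSA, hint, -, htiling⟩ := htile
  have hdet := hA.isUnit_det_rmat
  have hle : ∀ k, n₀ ≤ n₀ + k := Nat.le_add_right n₀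
  have hlevel : ∀ W : ℕ → Set (Fin d → ℤ), (∀ n, n₀ ≤ n → W n ⊆ Vset A D n) → ∀ k,
      XnSet A T (n₀ + k) (W (n₀ + k)) ⊆ T ∧ IsCompact (XnSet A T (n₀ + k) (W (n₀ + k))) :=
    fun W hW k => ⟨XnSet_subset_of_subset_Vset hdet hSA (hW _ (hle k)),
      isCompact_XnSet hSA.2.1 ((Vset_finite hSA.finite _).subset (hW _ (hle k))) _⟩
  have h₁ := hlevel W₁ fun n hn => hpart n hn ▸ Set.subset_union_left.trans Set.subset_union_left
  have h₂ := hlevel W₂ fun n hn => hpart n hn ▸ Set.subset_union_right.trans Set.subset_union_left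
  have h₃ := hlevel W₃ fun n hn => hpart n hn ▸ Set.subset_union_right
  have hanti : Antitone fun k => XnSet A T (n₀ + k) (W₂ (n₀ + k)) :=
    antitone_nat_of_succ_le fun k =>
      (XnSet_mono _ (hc2 _ (hle k))).trans (XnSet_childSet hdet hSA _ _).le
  have hdiam := (tendsto_ediam_XnSet hA hSA.2.1 (eventually_atTop.mpr
    ⟨n₀, fun n hn => ⟨hW2conn n hn, hK n hn⟩⟩)).comp
    (tendsto_atTop_mono (Nat.le_add_left · n₀) tendsto_id)
  obtain ⟨z, hz⟩ := exists_iInter_eq_singleton_of_tendsto_ediam hanti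
    (fun k => XnSet_nonempty hSA.1 (hne2 _ (hle k)) _) (fun k => (h₂ k).2) hdiam
  have hz₀ : z ∈ XnSet A T n₀ (W₂ n₀) := Set.mem_iInter.mp (hz ▸ Set.mem_singleton z) 0
  refine ⟨z, ?_, (h₂ 0).1 hz₀, sepUnion_diff_singleton_of_nested (fun k => (h₁ k).1)
    (fun k => (h₃ k).1) (fun k => diff_XnSet_subset_union hdet hSA (hpart _ (hle k)))
    (fun k => disjoint_XnSet hdet (hsep _ (hle k)) _)
    (fun k => XnSet_succ_subset hdet hSA (hc1 _ (hle k)))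
    (fun k => XnSet_succ_subset hdet hSA (hc3 _ (hle k))) hanti (fun k => (h₁ k).2.isClosed)
    (fun k => (h₃ k).2.isClosed) (fun k => (h₂ k).2.isClosed) hz ?_ ?_⟩
  · rw [Set.iInter_ge_eq_iInter_nat_add]
    simpa only [add_comm] using hz
  · obtain ⟨v, hv⟩ := hne1 n₀ le_rfl
    exact XnSet_diff_nonempty hdet hint htiling hv (Set.disjoint_left.mp (hd12 n₀ le_rfl) hv) _
  · obtain ⟨v, hv⟩ := hne3 n₀ le_rfl
    exact XnSet_diff_nonempty hdet hint htiling hv (Set.disjoint_right.mp (hd23 n₀ le_rfl) hv) _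

theorem statement4 {d : ℕ} (A : Matrix (Fin d) (Fin d) ℤ) (D : Set (Fin d → ℤ))
    (T : Set (Fin d → ℝ)) (htile : IsZdTile A D T) (hconn : IsConnected T)
    (n₀ : ℕ) (hn₀ : 1 ≤ n₀) (W₁ W₂ W₃ : ℕ → Set (Fin d → ℤ))
    -- `W₁, W₂, W₃` is a partition of `V_n` into pairwise disjoint nonempty sets
    (hpart : ∀ n, n₀ ≤ n → W₁ n ∪ W₂ n ∪ W₃ n = Vset A D n)
    (hd12 : ∀ n, n₀ ≤ n → Disjoint (W₁ n) (W₂ n))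
    (hd13 : ∀ n, n₀ ≤ n → Disjoint (W₁ n) (W₃ n))
    (hd23 : ∀ n, n₀ ≤ n → Disjoint (W₂ n) (W₃ n))
    (hne1 : ∀ n, n₀ ≤ n → (W₁ n).Nonempty)
    (hne2 : ∀ n, n₀ ≤ n → (W₂ n).Nonempty)
    (hne3 : ∀ n, n₀ ≤ n → (W₃ n).Nonempty)
    -- (i) the subgraph induced on `W₂` is connected and `W₂` separates `W₁` from `W₃`
    (hW2conn : ∀ n, n₀ ≤ n → HataConn T (W₂ n))
    (hsep : ∀ n, n₀ ≤ n → ∀ v ∈ W₁ n, ∀ v' ∈ W₃ n, trT T v ∩ trT T v' = ∅)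
    -- (ii) the inclusion relations between consecutive levels
    (hc1 : ∀ n, n₀ ≤ n → W₁ (n + 1) ⊆ childSet A D (W₁ n) ∪ childSet A D (W₂ n))
    (hc2 : ∀ n, n₀ ≤ n → W₂ (n + 1) ⊆ childSet A D (W₂ n))
    (hc3 : ∀ n, n₀ ≤ n → W₃ (n + 1) ⊆ childSet A D (W₃ n) ∪ childSet A D (W₂ n))
    -- (iii) uniform bound on the cardinality of `W₂`
    (K : ℕ) (hK : ∀ n, n₀ ≤ n → (W₂ n).encard ≤ K) :
    ∃ z : Fin d → ℝ, (⋂ n ≥ n₀, XnSet A T n (W₂ n)) = {z} ∧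
      z ∈ T ∧ SepUnion (T \ {z}) :=
  statement4_general A D T htile n₀ W₁ W₂ W₃ hpart hd12 hd23 hne1 hne2 hne3 hW2conn hsep hc1 hc2 hc3
    K hK
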